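/- arXiv:1805.05815 — 2 statements merged into one kernel-verified Lean document; each statement's English description precedes it below -/
import Mathlib

section
/- Two matrices A, B in sl(2,ℂ) (2×2 traceless complex matrices) have a common eigenvector if and only if det([A,B]) = 0, where [A,B] = AB - BA. -/
private lemma aux_common (A B : Matrix (Fin 2) (Fin 2) ℂ)
    (hA : A.trace = 0) (hB : B.trace = 0) (hq : A 0 1 ≠ 0)
    (hd : (A * B - B * A).det = 0) :
    ∃ v : Fin 2 → ℂ, v ≠ 0 ∧ ∃ a b : ℂ, A.mulVec v = a • v ∧ B.mulVec v = b • v := by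
  obtain ⟨p, q, r, s, t, u, hp, hqd, hr, hs, ht, hu⟩ :
      ∃ p q r s t u : ℂ, A 0 0 = p ∧ A 0 1 = q ∧ A 1 0 = r ∧
        B 0 0 = s ∧ B 0 1 = t ∧ B 1 0 = u :=
    ⟨_, _, _, _, _, _, rfl, rfl, rfl, rfl, rfl, rfl⟩
  rw [hqd] at hq
  have hA11 : A 1 1 = -p := by
    rw [Matrix.trace_fin_two, hp] at hA; linear_combination hA
  have hB11 : B 1 1 = -s := by
    rw [Matrix.trace_fin_two, hs] at hB; linear_combination hB
  have hAeq : A = !![p, q; r, -p] := by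
    ext i j; fin_cases i <;> fin_cases j <;> simp [hp, hqd, hr, hA11]
  have hBeq : B = !![s, t; u, -s] := by
    ext i j; fin_cases i <;> fin_cases j <;> simp [hs, ht, hu, hB11]
  subst hAeq hBeq
  have hd' : -(q*u - t*r)^2 - 4*(p*t - q*s)*(r*s - u*p) = 0 := by
    simp [Matrix.det_fin_two, Matrix.mul_apply, Fin.sum_univ_two, Matrix.sub_apply] at hd
    linear_combination hd
  obtain ⟨a, ha⟩ := IsAlgClosed.exists_pow_nat_eq (k := ℂ) (p^2 + q*r) zero_lt_two
  have key : (2*s*q*(a-p) + t*(a-p)^2 - u*q^2) * (2*s*q*(-a-p) + t*(-a-p)^2 - u*q^2) = 0 := by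
    linear_combination (t^2*(a^2 + p^2 + q*r) + 2*t*(t*p^2 - 2*p*q*s - u*q^2)
      - 4*(s*q - t*p)^2) * ha - q^2 * hd'
  obtain ⟨c, hc2, hcE⟩ : ∃ c : ℂ, c^2 = p^2 + q*r ∧
      2*s*q*(c-p) + t*(c-p)^2 - u*q^2 = 0 := by
    rcases mul_eq_zero.mp key with h | h
    · exact ⟨a, ha, h⟩
    · exact ⟨-a, by rw [neg_sq]; exact ha, h⟩
  refine ⟨![q, c - p], ?_, c, (s*q + t*(c-p))/q, ?_, ?_⟩
  · intro h
    apply hq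
    have := congrFun h 0
    simpa using this
  · funext i
    fin_cases i <;>
        simp [Matrix.mulVec, dotProduct, Fin.sum_univ_two] <;>
      first
        | ring1
        | linear_combination hc2
        | linear_combination -hc2
        | linear_combination 2*hc2
        | linear_combination -2*hc2
  · funext i
    fin_cases i <;>
        simp [Matrix.mulVec, dotProduct, Fin.sum_univ_two] <;>
        field_simp <;>
      first
        | ring1
        | linear_combination hcE
        | linear_combination -hcE
        | linear_combination q*hcE
        | linear_combination -q*hcE

/-- Two traceless 2×2 complex matrices have a common eigenvector if and only if
the determinant of their commutator `[A,B] = A*B - B*A` vanishes. -/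
theorem sl2_common_eigenvector_iff_det_commutator_eq_zero
    (A B : Matrix (Fin 2) (Fin 2) ℂ)
    (hA : A.trace = 0) (hB : B.trace = 0) :
    (∃ v : Fin 2 → ℂ, v ≠ 0 ∧ ∃ a b : ℂ, A.mulVec v = a • v ∧ B.mulVec v = b • v) ↔
      (A * B - B * A).det = 0 := by
  constructor
  · rintro ⟨v, hv, a, b, hAv, hBv⟩
    refine Matrix.exists_mulVec_eq_zero_iff.mp ⟨v, hv, ?_⟩
    rw [Matrix.sub_mulVec, ← Matrix.mulVec_mulVec, ← Matrix.mulVec_mulVec, hAv, hBv,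
      Matrix.mulVec_smul, Matrix.mulVec_smul, hAv, hBv, smul_comm, sub_self]
  · intro hd
    by_cases hq : A 0 1 ≠ 0
    · exact aux_common A B hA hB hq hd
    by_cases ht : B 0 1 ≠ 0
    · have hd' : (B * A - A * B).det = 0 := by
        rw [show B * A - A * B = -(A * B - B * A) from (neg_sub _ _).symm,
          Matrix.det_neg, hd]
        simp
      obtain ⟨v, hv, b, a, hBv, hAv⟩ := aux_common B A hB hA ht hd'
      exact ⟨v, hv, a, b, hAv, hBv⟩
    · push_neg at hq ht
      have hA11 : A 1 1 = -(A 0 0) := by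
        rw [Matrix.trace_fin_two] at hA; linear_combination hA
      have hB11 : B 1 1 = -(B 0 0) := by
        rw [Matrix.trace_fin_two] at hB; linear_combination hB
      have hAeq : A = !![A 0 0, 0; A 1 0, -(A 0 0)] := by
        ext i j; fin_cases i <;> fin_cases j <;> simp [hq, hA11]
      have hBeq : B = !![B 0 0, 0; B 1 0, -(B 0 0)] := by
        ext i j; fin_cases i <;> fin_cases j <;> simp [ht, hB11]
      refine ⟨![0, 1], ?_, -(A 0 0), -(B 0 0), ?_, ?_⟩
      · intro h
        have := congrFun h 1
        simp at this
      · rw [hAeq]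
        funext i
        fin_cases i <;> simp [Matrix.mulVec, dotProduct, Fin.sum_univ_two]
      · rw [hBeq]
        funext i
        fin_cases i <;> simp [Matrix.mulVec, dotProduct, Fin.sum_univ_two]
end

section
/- Two matrices A, B in gl(2,ℂ) have a common eigenvector if and only if det([A,B]) = 0. -/
/-!
A common eigenvector lies in the kernel of `[A, B]`. Conversely, if `A` and `B` commute, an
eigenspace of `A` is `B`-invariant, so `B` has an eigenvector inside it. Otherwise
`C = [A, B]` is a nonzero singular traceless `2 × 2` matrix; the identity
`C M C = tr (M C) • C - det C • adj M` then gives `C² = 0` and, since `tr (A C) = tr (B C) = 0`,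
also `C A C = C B C = 0`. Hence for `w = C u ≠ 0` the vectors `w`, `A w`, `B w` all lie in the
line `ker C`, so `w` is a common eigenvector.
-/

open Module

namespace Module.End

variable {K V : Type*} [Field K] [AddCommGroup V] [Module K V]

theorem exists_hasEigenvector_of_commute [IsAlgClosed K] [FiniteDimensional K V] [Nontrivial V]
    {f g : End K V} (h : Commute f g) :
    ∃ v : V, ∃ a b : K, f.HasEigenvector a v ∧ g.HasEigenvector b v := by
  obtain ⟨a, ha⟩ := f.exists_eigenvalue
  have hmaps : Set.MapsTo g (f.eigenspace a) (f.eigenspace a) := by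
    intro v hv
    rw [SetLike.mem_coe, mem_eigenspace_iff] at hv ⊢
    rw [← Module.End.mul_apply, h.eq, Module.End.mul_apply, hv, map_smul]
  have : Nontrivial (f.eigenspace a) := Submodule.nontrivial_iff_ne_bot.mpr ha
  obtain ⟨b, hb⟩ := exists_eigenvalue (g.restrict hmaps)
  obtain ⟨⟨v, hva⟩, hvb⟩ := hb.exists_hasEigenvector
  have hv0 : v ≠ 0 := fun hv => hvb.2 (Subtype.ext hv)
  refine ⟨v, a, b, ⟨hva, hv0⟩, ⟨?_, hv0⟩⟩
  rw [mem_eigenspace_iff]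
  exact congrArg Subtype.val hvb.apply_eq_smul

end Module.End

namespace LinearMap

variable {K V W : Type*} [Field K] [AddCommGroup V] [Module K V] [AddCommGroup W] [Module K W]

theorem exists_smul_eq_of_mem_ker [FiniteDimensional K V] (hV : finrank K V ≤ 2)
    {f : V →ₗ[K] W} (hf : f ≠ 0) {x y : V} (hx0 : x ≠ 0) (hx : f x = 0) (hy : f y = 0) :
    ∃ c : K, c • x = y := by
  have hrange : finrank K (range f) ≠ 0 := by
    rwa [Ne, Submodule.finrank_eq_zero, range_eq_bot]
  have hker : finrank K (ker f) ≠ 0 := by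
    rw [Ne, Submodule.finrank_eq_zero, Submodule.eq_bot_iff]
    exact fun h => hx0 (h x hx)
  have hrank := f.finrank_range_add_finrank_ker
  have hline : finrank K (ker f) = 1 := by omega
  obtain ⟨c, hc⟩ := exists_smul_eq_of_finrank_eq_one hline
    (x := (⟨x, hx⟩ : ker f)) (fun h => hx0 (congrArg Subtype.val h)) ⟨y, hy⟩
  exact ⟨c, congrArg Subtype.val hc⟩

end LinearMap

namespace Matrix

variable {n R K : Type*} [Fintype n] [Field K]

def HasCommonEigenvector [CommSemiring R] (A B : Matrix n n R) : Prop :=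
  ∃ v : n → R, v ≠ 0 ∧ ∃ a b : R, A *ᵥ v = a • v ∧ B *ᵥ v = b • v

theorem HasCommonEigenvector.det_commutator_eq_zero [CommRing R] [IsDomain R] [DecidableEq n]
    {A B : Matrix n n R} (h : A.HasCommonEigenvector B) : (A * B - B * A).det = 0 := by
  obtain ⟨v, hv, a, b, hA, hB⟩ := h
  refine exists_mulVec_eq_zero_iff.mp ⟨v, hv, ?_⟩
  rw [sub_mulVec, ← mulVec_mulVec, ← mulVec_mulVec, hA, hB, mulVec_smul, mulVec_smul, hA, hB,
    smul_smul, smul_smul, mul_comm, sub_self]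

theorem hasCommonEigenvector_of_commute [IsAlgClosed K] [Nonempty n]
    [DecidableEq n] {A B : Matrix n n K} (h : Commute A B) : A.HasCommonEigenvector B := by
  obtain ⟨v, a, b, hA, hB⟩ :=
    Module.End.exists_hasEigenvector_of_commute (h.map (toLinAlgEquiv' (R := K)))
  exact ⟨v, hA.2, a, b, hA.apply_eq_smul, hB.apply_eq_smul⟩

theorem trace_mul_commutator_left [CommRing R] (A B : Matrix n n R) :
    (A * (A * B - B * A)).trace = 0 := by
  rw [mul_sub, trace_sub, sub_eq_zero, ← mul_assoc, ← mul_assoc]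
  exact (trace_mul_cycle A B A).symm

theorem trace_mul_commutator_right [CommRing R] (A B : Matrix n n R) :
    (B * (A * B - B * A)).trace = 0 := by
  rw [mul_sub, trace_sub, sub_eq_zero, ← mul_assoc, ← mul_assoc]
  exact trace_mul_cycle B A B

/-- Polarised Cayley–Hamilton for `2 × 2` matrices: for `M = 1` it reads
`C ^ 2 = tr C • C - det C • 1`. -/
theorem mul_mul_eq_trace_smul_sub_det_smul_adjugate_fin_two [CommRing R]
    (C M : Matrix (Fin 2) (Fin 2) R) :
    C * M * C = (M * C).trace • C - C.det • M.adjugate := by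
  rw [adjugate_fin_two, trace_fin_two, det_fin_two]
  ext i j
  fin_cases i <;> fin_cases j <;>
    simp only [mul_apply, Fin.sum_univ_two, sub_apply, smul_apply, of_apply, cons_val',
      cons_val_zero, cons_val_one, cons_val_fin_one, smul_eq_mul, Fin.zero_eta, Fin.mk_one] <;>
    ring

theorem hasCommonEigenvector_of_det_commutator_eq_zero {A B : Matrix (Fin 2) (Fin 2) K}
    (hC : A * B - B * A ≠ 0) (hdet : (A * B - B * A).det = 0) :
    A.HasCommonEigenvector B := by
  set C := A * B - B * A
  have hsandwich (M : Matrix (Fin 2) (Fin 2) K) (hM : (M * C).trace = 0) : C * M * C = 0 := by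
    rw [mul_mul_eq_trace_smul_sub_det_smul_adjugate_fin_two, hM, hdet, zero_smul, zero_smul,
      sub_zero]
  have hCC : C * C = 0 := by
    simpa using hsandwich 1 (by rw [one_mul, trace_sub, trace_mul_comm, sub_self])
  obtain ⟨u, hu⟩ : ∃ u, C *ᵥ u ≠ 0 := by
    by_contra! h
    exact hC (toLin'.injective (LinearMap.ext fun u => by simpa using h u))
  have hline (M : Matrix (Fin 2) (Fin 2) K) (hM : C * M * C = 0) :
      ∃ c : K, c • C *ᵥ u = M *ᵥ C *ᵥ u :=
    (toLin' C).exists_smul_eq_of_mem_ker (by simp) (by simpa using hC) hu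
      (by rw [toLin'_apply, mulVec_mulVec, hCC, zero_mulVec])
      (by rw [toLin'_apply, mulVec_mulVec, mulVec_mulVec, hM, zero_mulVec])
  obtain ⟨a, ha⟩ := hline A (hsandwich A (trace_mul_commutator_left A B))
  obtain ⟨b, hb⟩ := hline B (hsandwich B (trace_mul_commutator_right A B))
  exact ⟨C *ᵥ u, hu, a, b, ha.symm, hb.symm⟩

end Matrix

/-- Shemesh's criterion for 2×2 matrices: two matrices `A, B ∈ gl(2,ℂ)` have a
common eigenvector if and only if `det [A,B] = 0`. -/
theorem gl2_common_eigenvector_iff_det_commutator_eq_zero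
    (A B : Matrix (Fin 2) (Fin 2) ℂ) :
    (∃ v : Fin 2 → ℂ, v ≠ 0 ∧ ∃ a b : ℂ, A.mulVec v = a • v ∧ B.mulVec v = b • v) ↔
      (A * B - B * A).det = 0 := by
  refine ⟨Matrix.HasCommonEigenvector.det_commutator_eq_zero, fun hdet => ?_⟩
  by_cases hC : A * B - B * A = 0
  · exact Matrix.hasCommonEigenvector_of_commute (sub_eq_zero.mp hC)
  · exact Matrix.hasCommonEigenvector_of_det_commutator_eq_zero hC hdet
end
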